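/- If removing an edge (x,y) from a decomposable (chordal) graph G yields a chordal graph, then x and y are contained in exactly one maximal clique of G; conversely, if x and y lie in exactly one common maximal clique of G, then G minus the edge (x,y) is chordal. -/

import Mathlib

/-!
Both sides are equivalent to the common neighbourhood `N` of `x` and `y` being a clique.
If `N` is a clique, every clique through `x` and `y` lies in the clique `{x, y} ∪ N`, which is
therefore the unique maximal one; two non-adjacent vertices of `N` extend with `x, y` to two
distinct maximal cliques.

Two non-adjacent `a, b ∈ N` would make `x a y b` a chordless 4-cycle of `G - xy`. Conversely, a
chordless cycle of length at least four in `G - xy` has a chord in `G`, necessarily `xy`. This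
chord cuts it into two `x`-`y` paths, each closing with `xy` to a chordless cycle of `G`, hence
a triangle; so the cycle is `x a y b` with `a, b ∈ N` non-adjacent.
-/

/-- A graph is chordal (decomposable) if every cycle of length at least four has a
chord: a pair of vertices of the cycle that are adjacent in the graph but whose
edge is not an edge of the cycle. -/
def IsChordal {V : Type*} (G : SimpleGraph V) : Prop :=
  ∀ ⦃v : V⦄ (c : G.Walk v v), c.IsCycle → 4 ≤ c.length →
    ∃ u w : V, G.Adj u w ∧ u ∈ c.support ∧ w ∈ c.support ∧ s(u, w) ∉ c.edges

/-- A maximal clique of `G`. -/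
def IsMaxClique {V : Type*} (G : SimpleGraph V) (s : Set V) : Prop :=
  G.IsClique s ∧ ∀ t : Set V, G.IsClique t → s ⊆ t → s = t

open SimpleGraph

section

variable {V : Type*} {G : SimpleGraph V} {u v w x y : V}

lemma SimpleGraph.IsClique.exists_isMaxClique_superset {s : Set V} (hs : G.IsClique s) :
    ∃ t, IsMaxClique G t ∧ s ⊆ t := by
  obtain ⟨t, hst, ht⟩ := zorn_subset_nonempty {t | G.IsClique t}
    (fun c hc hchain _ ↦ ⟨⋃₀ c, (isClique_sUnion hchain.directedOn).mpr hc,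
      fun _ ↦ Set.subset_sUnion_of_mem⟩) s hs
  exact ⟨t, ⟨ht.prop, fun _ ↦ ht.eq_of_subset⟩, hst⟩

lemma subset_insert_insert_commonNeighbors {t : Set V} (ht : G.IsClique t) (hx : x ∈ t)
    (hy : y ∈ t) : t ⊆ insert x (insert y (G.commonNeighbors x y)) := by
  intro z hz
  by_cases hzx : z = x
  · exact .inl hzx
  by_cases hzy : z = y
  · exact .inr (.inl hzy)
  exact .inr (.inr ⟨ht hx hz (Ne.symm hzx), ht hy hz (Ne.symm hzy)⟩)

lemma existsUnique_isMaxClique_iff_isClique_commonNeighbors (hxy : G.Adj x y) :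
    (∃! s, IsMaxClique G s ∧ x ∈ s ∧ y ∈ s) ↔ G.IsClique (G.commonNeighbors x y) := by
  constructor
  · rintro ⟨s, ⟨hs, hxs, hys⟩, huniq⟩
    refine hs.1.subset fun a ha ↦ ?_
    have hxya : G.IsClique {a, x, y} := by
      refine isClique_insert.mpr ⟨isClique_pair.mpr fun _ ↦ hxy, ?_⟩
      rintro b (rfl | rfl) _
      exacts [ha.1.symm, ha.2.symm]
    obtain ⟨t, ht, hsub⟩ := hxya.exists_isMaxClique_superset
    rw [← huniq t ⟨ht, hsub (by simp), hsub (by simp)⟩]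
    exact hsub (by simp)
  · intro hN
    set K := insert x (insert y (G.commonNeighbors x y))
    have hK : G.IsClique K := by
      refine isClique_insert.mpr ⟨isClique_insert.mpr ⟨hN, fun b hb _ ↦ hb.2⟩, ?_⟩
      rintro b (rfl | hb) _
      exacts [hxy, hb.1]
    refine ⟨K, ⟨⟨hK, fun t ht hKt ↦ hKt.antisymm ?_⟩, by simp [K], by simp [K]⟩, ?_⟩
    · exact subset_insert_insert_commonNeighbors ht (hKt (by simp [K])) (hKt (by simp [K]))
    · rintro s ⟨hs, hxs, hys⟩
      exact hs.2 K hK (subset_insert_insert_commonNeighbors hs.1 hxs hys)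

namespace SimpleGraph.Walk

lemma IsChordless.reverse {p : G.Walk u v} (hp : p.IsChordless) : p.reverse.IsChordless := by
  refine isChordless_iff_forall_mem_edges.mpr fun a b ha hb hab ↦ ?_
  rw [support_reverse, List.mem_reverse] at ha hb
  rw [edges_reverse, List.mem_reverse]
  exact hp.mem_edges ha hb hab

lemma IsChordless.rotate [DecidableEq V] {c : G.Walk v v} (hc : c.IsChordless)
    (hu : u ∈ c.support) : (c.rotate u hu).IsChordless := by
  refine isChordless_iff_forall_mem_edges.mpr fun a b ha hb hab ↦ ?_
  rw [mem_support_rotate_iff] at ha hb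
  exact (c.rotate_edges u hu).perm.mem_iff.mpr (hc.mem_edges ha hb hab)

lemma IsChordless.of_append_left {p : G.Walk u v} {q : G.Walk v w}
    (h : (p.append q).IsChordless) (hpq : ∀ z ∈ p.support, z ∈ q.support → z = u ∨ z = v)
    (huv : ¬ G.Adj u v) : p.IsChordless := by
  refine isChordless_iff_forall_mem_edges.mpr fun a b ha hb hab ↦ ?_
  have hmem := h.mem_edges ((mem_support_append_iff p q).mpr (.inl ha))
    ((mem_support_append_iff p q).mpr (.inl hb)) hab
  rw [edges_append, List.mem_append] at hmem
  refine hmem.resolve_right fun hq ↦ huv ?_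
  rcases hpq a ha (q.fst_mem_support_of_mem_edges hq) with rfl | rfl <;>
    rcases hpq b hb (q.snd_mem_support_of_mem_edges hq) with rfl | rfl
  all_goals first | exact hab | exact hab.symm | exact (hab.ne rfl).elim

lemma IsChordless.of_append_right {p : G.Walk u v} {q : G.Walk v w}
    (h : (p.append q).IsChordless) (hpq : ∀ z ∈ p.support, z ∈ q.support → z = v ∨ z = w)
    (hvw : ¬ G.Adj v w) : q.IsChordless := by
  have hrev : (q.reverse.append p.reverse).IsChordless := reverse_append p q ▸ h.reverse
  have hqp : ∀ z ∈ q.reverse.support, z ∈ p.reverse.support → z = w ∨ z = v := by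
    simp only [support_reverse, List.mem_reverse]
    exact fun z hq hp ↦ (hpq z hp hq).symm
  simpa using (hrev.of_append_left hqp fun h ↦ hvw h.symm).reverse

lemma IsCycle.exists_append_isPath {c : G.Walk u u} (hc : c.IsCycle) (hv : v ∈ c.support)
    (huv : u ≠ v) : ∃ (p : G.Walk u v) (q : G.Walk v u), p.append q = c ∧ p.IsPath ∧
      q.IsPath ∧ ∀ z ∈ p.support, z ∈ q.support → z = u ∨ z = v := by
  classical
  refine ⟨c.takeUntil v hv, c.dropUntil v hv, c.take_spec hv, hc.isPath_takeUntil hv, ?_⟩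
  rw [← c.take_spec hv] at hc
  refine ⟨hc.isPath_of_append_right (not_nil_of_ne huv), fun z hzp hzq ↦ ?_⟩
  have hnd := hc.support_nodup
  rw [tail_support_append, List.nodup_append] at hnd
  rw [← cons_tail_support, List.mem_cons] at hzp hzq
  rcases hzp with rfl | hzp
  · exact .inl rfl
  rcases hzq with rfl | hzq
  · exact .inr rfl
  exact absurd rfl (hnd.2.2 z hzp z hzq)

lemma exists_adj_adj_of_length_eq_two : ∀ (p : G.Walk u v), p.length = 2 →
    ∃ a ∈ p.support, G.Adj u a ∧ G.Adj a v
  | .cons h₁ (.cons h₂ .nil), _ => ⟨_, by simp, h₁, h₂⟩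

end SimpleGraph.Walk

lemma SimpleGraph.Adj.deleteEdges_of_ne (h : G.Adj u w) (hx : w ≠ x) (hy : w ≠ y) :
    (G.deleteEdges {s(x, y)}).Adj u w :=
  (deleteEdges_adj ..).mpr ⟨h, by simp [hx, hy]⟩

lemma isChordal_iff_forall_isChordless : IsChordal G ↔
    ∀ ⦃v : V⦄ (c : G.Walk v v), c.IsCycle → c.IsChordless → c.length < 4 := by
  simp only [IsChordal, Walk.isChordless_iff_forall_mem_edges]
  refine forall₂_congr fun v c ↦ ?_
  grind

lemma IsChordal.adj_or_adj_of_fourCycle (hG : IsChordal G) {a b : V} (hxa : G.Adj x a)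
    (hay : G.Adj a y) (hyb : G.Adj y b) (hbx : G.Adj b x) (hxy : x ≠ y) (hab : a ≠ b) :
    G.Adj x y ∨ G.Adj a b := by
  by_contra! h
  have hc : (Walk.cons hxa (.cons hay (.cons hyb (.cons hbx .nil)))).IsCycle := by
    simp [Walk.cons_isCycle_iff, hxa.ne, hay.ne, hyb.ne, hbx.ne, hxa.ne', hbx.ne', hxy, hxy.symm,
      hab]
  obtain ⟨u, w, huw, hu, hw, hne⟩ := hG _ hc (by simp)
  simp only [Walk.support_cons, Walk.support_nil, List.mem_cons, List.not_mem_nil, or_false,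
    Walk.edges_cons, Walk.edges_nil, Sym2.eq, Sym2.rel_iff', Prod.mk.injEq, Prod.swap_prod_mk,
    not_or, not_and] at hu hw hne
  grind [G.adj_comm, SimpleGraph.irrefl]

lemma isClique_commonNeighbors_of_isChordal_deleteEdges (hxy : x ≠ y)
    (hH : IsChordal (G.deleteEdges {s(x, y)})) : G.IsClique (G.commonNeighbors x y) := by
  rintro a ⟨hxa, hya⟩ b ⟨hxb, hyb⟩ hab
  have hax : a ≠ x := hxa.ne'
  have hay : a ≠ y := hya.ne'
  have hbx : b ≠ x := hxb.ne'
  have hby : b ≠ y := hyb.ne'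
  rcases hH.adj_or_adj_of_fourCycle (hxa.deleteEdges_of_ne hax hay)
    (hya.deleteEdges_of_ne hax hay).symm (hyb.deleteEdges_of_ne hbx hby)
    (hxb.deleteEdges_of_ne hbx hby).symm hxy hab with h | h
  · simp at h
  · exact ((deleteEdges_adj ..).mp h).1

lemma IsChordal.length_le_two_of_deleteEdges (hG : IsChordal G) (hxy : G.Adj x y)
    {p : (G.deleteEdges {s(x, y)}).Walk x y} (hp : p.IsPath) (hpc : p.IsChordless) :
    p.length ≤ 2 := by
  have hle := G.deleteEdges_le {s(x, y)}
  set c := Walk.cons hxy.symm (p.mapLe hle)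
  have hc : c.IsCycle := by
    refine (Walk.cons_isCycle_iff _ _).mpr ⟨hp.mapLe hle, fun h ↦ ?_⟩
    rw [Walk.edges_mapLe_eq_edges] at h
    simpa using p.edges_subset_edgeSet h
  have hcc : c.IsChordless := by
    refine Walk.isChordless_iff_forall_mem_edges.mpr fun u w hu hw huw ↦ ?_
    simp only [c, Walk.support_cons, Walk.edges_cons, Walk.support_mapLe_eq_support,
      Walk.edges_mapLe_eq_edges, List.mem_cons] at hu hw ⊢
    by_cases h : s(u, w) = s(x, y)
    · exact .inl (h.trans Sym2.eq_swap)
    have hsupp : ∀ {z}, z = y ∨ z ∈ p.support → z ∈ p.support :=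
      fun hz ↦ hz.elim (· ▸ p.end_mem_support) id
    exact .inr (hpc.mem_edges (hsupp hu) (hsupp hw) ((deleteEdges_adj ..).mpr ⟨huw, h⟩))
  have := isChordal_iff_forall_isChordless.mp hG c hc hcc
  simp only [c, Walk.length_cons, Walk.length_mapLe] at this
  omega

lemma IsChordal.notMem_support_of_deleteEdges (hG : IsChordal G) (hxy : G.Adj x y)
    (hN : G.IsClique (G.commonNeighbors x y)) {c : (G.deleteEdges {s(x, y)}).Walk x x}
    (hc : c.IsCycle) (hcc : c.IsChordless) (h4 : 4 ≤ c.length) : y ∉ c.support := by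
  intro hy
  have hle := G.deleteEdges_le {s(x, y)}
  have hnxy : ¬ (G.deleteEdges {s(x, y)}).Adj x y := by simp
  obtain ⟨p, q, rfl, hp, hq, hpq⟩ := hc.exists_append_isPath hy hxy.ne
  have hp2 := hG.length_le_two_of_deleteEdges hxy hp (hcc.of_append_left hpq hnxy)
  have hq2 := hG.length_le_two_of_deleteEdges hxy hq.reverse
    (hcc.of_append_right (fun z hzp hzq ↦ (hpq z hzp hzq).symm) (hnxy ·.symm)).reverse
  rw [Walk.length_append] at h4
  rw [Walk.length_reverse] at hq2
  obtain ⟨a, hap, hxa, hay⟩ := p.exists_adj_adj_of_length_eq_two (by omega)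
  obtain ⟨b, hbq, hyb, hbx⟩ := q.exists_adj_adj_of_length_eq_two (by omega)
  have hab : a ≠ b := by
    rintro rfl
    rcases hpq a hap hbq with rfl | rfl
    exacts [hxa.ne rfl, hay.ne rfl]
  have hGab : G.Adj a b := hN ⟨hle hxa, hle hay.symm⟩ ⟨hle hbx.symm, hle hyb⟩ hab
  have := hcc.mem_edges ((Walk.mem_support_append_iff p q).mpr (.inl hap))
    ((Walk.mem_support_append_iff p q).mpr (.inr hbq)) (hGab.deleteEdges_of_ne hbx.ne hyb.ne')
  rw [Walk.edges_append, List.mem_append] at this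
  rcases this with h | h
  · rcases hpq b (p.snd_mem_support_of_mem_edges h) hbq with rfl | rfl
    exacts [hbx.ne rfl, hyb.ne rfl]
  · rcases hpq a hap (q.fst_mem_support_of_mem_edges h) with rfl | rfl
    exacts [hxa.ne rfl, hay.ne rfl]

lemma IsChordal.deleteEdges_of_isClique_commonNeighbors (hG : IsChordal G) (hxy : G.Adj x y)
    (hN : G.IsClique (G.commonNeighbors x y)) : IsChordal (G.deleteEdges {s(x, y)}) := by
  classical
  refine isChordal_iff_forall_isChordless.mpr fun v c hc hcc ↦ ?_
  by_contra! h4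
  have hle := G.deleteEdges_le {s(x, y)}
  obtain ⟨u, w, huw, hu, hw, hne⟩ := hG (c.mapLe hle) (hc.mapLe hle) (by simpa using h4)
  rw [Walk.support_mapLe_eq_support] at hu hw
  rw [Walk.edges_mapLe_eq_edges] at hne
  have huwxy : s(u, w) = s(x, y) := by
    by_contra h
    exact hne (hcc.mem_edges hu hw ((deleteEdges_adj ..).mpr ⟨huw, h⟩))
  obtain ⟨hx, hy⟩ : x ∈ c.support ∧ y ∈ c.support := by
    rcases Sym2.eq_iff.mp huwxy with ⟨rfl, rfl⟩ | ⟨rfl, rfl⟩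
    exacts [⟨hu, hw⟩, ⟨hw, hu⟩]
  exact hG.notMem_support_of_deleteEdges hxy hN (hc.rotate hx) (hcc.rotate hx) (by simpa using h4)
    ((c.mem_support_rotate_iff x hx).mpr hy)

end

theorem chordal_deleteEdge_iff_unique_maxClique {V : Type*}
    (G : SimpleGraph V) (hG : IsChordal G) (x y : V) (hxy : G.Adj x y) :
    IsChordal (G.deleteEdges {s(x, y)}) ↔
      ∃! s : Set V, IsMaxClique G s ∧ x ∈ s ∧ y ∈ s := by
  rw [existsUnique_isMaxClique_iff_isClique_commonNeighbors hxy]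
  exact ⟨isClique_commonNeighbors_of_isChordal_deleteEdges hxy.ne,
    hG.deleteEdges_of_isClique_commonNeighbors hxy⟩
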